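/- If G is a finite simple graph with α∘(G) > 2, then χ_c(G) ≥ girth(G). -/

import Mathlib

open SimpleGraph

/-- A list of vertices forms a cycle of `G` (single edges count as cycles of length 2):
at least two vertices, no repetitions, and consecutive vertices (cyclically) adjacent. -/
def IsCycleList {V : Type*} (G : SimpleGraph V) (l : List V) : Prop :=
  2 ≤ l.length ∧ l.Nodup ∧
    ∀ i : Fin l.length,
      G.Adj (l.get i) (l.get ⟨((i : ℕ) + 1) % l.length, Nat.mod_lt _ i.pos⟩)

/-- A cycle of `G` is monotonic for a circular ordering `σ` of the vertices if, after a
suitable rotation, its vertices appear in increasing order of position, i.e. the vertices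
`u_1, …, u_k, u_1` of the cycle appear in this cyclic order in `σ`. -/
def IsMonotonicCycle {V : Type*} [Fintype V] (G : SimpleGraph V)
    (σ : V ≃ Fin (Fintype.card V)) (l : List V) : Prop :=
  IsCycleList G l ∧ ∃ r : ℕ, ((l.rotate r).map fun x => (σ x : ℕ)).Chain' (· < ·)

/-- The circular altitude of `G`: the largest `k` such that every circular ordering of
the vertices of `G` contains a monotonic cycle with at least `k` vertices. -/
noncomputable def circAltitude {V : Type*} [Fintype V] (G : SimpleGraph V) : ℕ :=
  sSup {k | ∀ σ : V ≃ Fin (Fintype.card V), ∃ l : List V,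
    IsMonotonicCycle G σ l ∧ k ≤ l.length}

/-- A `(p,q)`-colouring of `G`: a map `c : V(G) → {1, …, p}` (encoded as `Fin p`) such
that `q ≤ |c u − c v| ≤ p − q` for every edge `uv` of `G`. -/
def IsPQColoring {V : Type*} (G : SimpleGraph V) (p q : ℕ) (c : V → Fin p) : Prop :=
  ∀ a b : V, G.Adj a b →
    (q : ℤ) ≤ |((c a : ℕ) : ℤ) - ((c b : ℕ) : ℤ)| ∧
      |((c a : ℕ) : ℤ) - ((c b : ℕ) : ℤ)| ≤ (p : ℤ) - (q : ℤ)

/-- The circular chromatic number `χ_c(G)`: the infimum of `p / q` over all pairs of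
positive integers `(p, q)` for which `G` admits a `(p,q)`-colouring. -/
noncomputable def circChromNum {V : Type*} [Fintype V] (G : SimpleGraph V) : ℝ :=
  sInf {x : ℝ | ∃ p q : ℕ, 0 < p ∧ 0 < q ∧ x = (p : ℝ) / (q : ℝ) ∧
    ∃ c : V → Fin p, IsPQColoring G p q c}

/-!
Given a `(p,q)`-colouring `c`, order the vertices by colour. As `α∘(G) ≥ 3`, this ordering
has a monotonic cycle `u_1, …, u_k` with `k ≥ 3`. Along it the colours increase by at least `q`
at each step, while the closing edge `u_k u_1` bounds the total increase by `p - q`. Hence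
`q k ≤ p`, and `girth(G) ≤ k ≤ p / q`.
-/

theorem List.IsChain.add_mul_length_le {α : Type*} {f : α → ℕ} {d : ℕ} :
    ∀ {l : List α}, l.IsChain (fun x y => f x + d ≤ f y) → (hne : l ≠ []) →
      f (l.head hne) + d * (l.length - 1) ≤ f (l.getLast hne)
  | [_], _, _ => by simp
  | a :: b :: t, h, _ => by
    have ih := List.IsChain.add_mul_length_le h.of_cons (List.cons_ne_nil b t)
    have hab : f a + d ≤ f b := h.rel
    simp only [List.head_cons, List.length_cons, List.getLast_cons_cons, Nat.add_sub_cancel]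
      at ih ⊢
    rw [Nat.mul_succ]
    omega

namespace IsCycleList

variable {V : Type*} {G : SimpleGraph V} {l : List V}

theorem adj_getElem_succ (hl : IsCycleList G l) {i : ℕ} (hi : i + 1 < l.length) :
    G.Adj l[i] l[i + 1] := by
  simpa [Nat.mod_eq_of_lt hi] using hl.2.2 ⟨i, by omega⟩

theorem adj_getLast_head (hl : IsCycleList G l) (hne : l ≠ []) :
    G.Adj (l.getLast hne) (l.head hne) := by
  have hpos : 0 < l.length := List.length_pos_iff.mpr hne
  simpa [List.getLast_eq_getElem, List.head_eq_getElem, Nat.sub_add_cancel hpos] using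
    hl.2.2 ⟨l.length - 1, by omega⟩

theorem isChain_adj (hl : IsCycleList G l) : l.IsChain G.Adj :=
  List.isChain_iff_getElem.mpr fun _ hi => hl.adj_getElem_succ hi

theorem rotate (hl : IsCycleList G l) (r : ℕ) : IsCycleList G (l.rotate r) := by
  obtain ⟨h2, hnd, hadj⟩ := hl
  refine ⟨by simpa using h2, List.nodup_rotate.mpr hnd, fun ⟨i, hi⟩ => ?_⟩
  simp only [List.length_rotate] at hi
  have hidx : ((i + 1) % l.length + r) % l.length = ((i + r) % l.length + 1) % l.length := by
    rw [Nat.mod_add_mod, Nat.mod_add_mod, Nat.add_right_comm]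
  simpa [List.getElem_rotate, hidx] using hadj ⟨(i + r) % l.length, Nat.mod_lt _ (by omega)⟩

theorem egirth_le (hl : IsCycleList G l) (h3 : 3 ≤ l.length) : G.egirth ≤ l.length := by
  have hne : l ≠ [] := List.ne_nil_of_length_pos (by omega)
  let w := Walk.cons (hl.adj_getLast_head hne) (Walk.ofSupport l hne hl.isChain_adj)
  have hw : w.IsCycle := by
    rw [Walk.isCycle_iff_isPath_tail_and_le_length]
    refine ⟨?_, by simp [w]; omega⟩
    simpa [w, Walk.tail_cons] using Walk.IsPath.mk' (by simpa using hl.2.1)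
  simpa [w, Nat.sub_add_cancel (by omega : 1 ≤ l.length)] using egirth_le_length hw

end IsCycleList

theorem IsPQColoring.add_le_of_adj {V : Type*} {G : SimpleGraph V} {p q : ℕ} {c : V → Fin p}
    (hc : IsPQColoring G p q c) {a b : V} (hab : G.Adj a b) (hle : c a ≤ c b) :
    (c a : ℕ) + q ≤ c b := by
  have h := (hc a b hab).1
  rw [abs_sub_comm, abs_of_nonneg (by simpa using hle)] at h
  omega

theorem isPQColoring_one_of_injective {V : Type*} (G : SimpleGraph V) {p : ℕ} {c : V → Fin p}
    (hc : Function.Injective c) : IsPQColoring G p 1 c := by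
  intro a b hab
  have hne : (c a : ℕ) ≠ c b := fun h => G.ne_of_adj hab (hc (Fin.ext h))
  have ha := (c a).isLt
  have hb := (c b).isLt
  constructor <;> rcases abs_cases ((c a : ℕ) - (c b : ℕ) : ℤ) with ⟨h, _⟩ | ⟨h, _⟩ <;> omega

theorem exists_equiv_fin_monotone {V α : Type*} [Fintype V] [LinearOrder α] (f : V → α) :
    ∃ σ : V ≃ Fin (Fintype.card V), Monotone (f ∘ σ.symm) := by
  let e := Fintype.equivFin V
  refine ⟨e.trans (Tuple.sort (f ∘ e.symm)).symm, ?_⟩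
  simpa [Function.comp_def] using Tuple.monotone_sort (f ∘ e.symm)

section Fintype

variable {V : Type*} [Fintype V] {G : SimpleGraph V}

theorem IsMonotonicCycle.mul_length_le {σ : V ≃ Fin (Fintype.card V)} {l : List V}
    (hl : IsMonotonicCycle G σ l) {p q : ℕ} {c : V → Fin p} (hc : IsPQColoring G p q c)
    (hσ : Monotone (c ∘ σ.symm)) : q * l.length ≤ p := by
  obtain ⟨hcyc, r, hmono⟩ := hl
  rw [← List.length_rotate l r]
  set l' := l.rotate r
  have hcyc' : IsCycleList G l' := hcyc.rotate r
  have hne : l' ≠ [] := List.ne_nil_of_length_pos (by have := hcyc'.1; omega)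
  have hσl' : l'.IsChain fun x y => (σ x : ℕ) < σ y := (List.isChain_map _).mp hmono
  have hgap : l'.IsChain fun x y => (c x : ℕ) + q ≤ c y :=
    List.isChain_iff_getElem.mpr fun i hi => hc.add_le_of_adj (hcyc'.adj_getElem_succ hi)
      (by simpa using hσ (List.isChain_iff_getElem.mp hσl' i hi).le)
  have hrise := hgap.add_mul_length_le hne
  have hclose := le_abs_self _ |>.trans (hc _ _ (hcyc'.adj_getLast_head hne)).2
  have hlen : 2 ≤ l'.length := hcyc'.1
  obtain ⟨n, hn⟩ : ∃ n, l'.length = n + 1 := ⟨l'.length - 1, by omega⟩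
  rw [hn, Nat.add_sub_cancel] at hrise
  rw [hn, Nat.mul_succ]
  omega

theorem exists_isMonotonicCycle_circAltitude_le (h : 0 < circAltitude G)
    (σ : V ≃ Fin (Fintype.card V)) :
    ∃ l, IsMonotonicCycle G σ l ∧ circAltitude G ≤ l.length := by
  have hmem : circAltitude G ∈ {k | ∀ σ : V ≃ Fin (Fintype.card V), ∃ l : List V,
      IsMonotonicCycle G σ l ∧ k ≤ l.length} := by
    refine Nat.sSup_mem ?_ ⟨Fintype.card V, fun k hk => ?_⟩
    · refine Set.nonempty_iff_ne_empty.mpr fun hempty => ?_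
      simp [circAltitude, hempty] at h
    · obtain ⟨l, hl, hkl⟩ := hk (Fintype.equivFin V)
      exact hkl.trans hl.1.2.1.length_le_card
  exact hmem σ

theorem le_circChromNum {n : ℕ}
    (hn : ∀ p q (c : V → Fin p), IsPQColoring G p q c → q * n ≤ p) :
    (n : ℝ) ≤ circChromNum G := by
  -- `p = |V| + 1` keeps `0 < p` also for empty `V`.
  have hinj := (Fin.castSucc_injective _).comp (Fintype.equivFin V).injective
  refine le_csInf ⟨_, Fintype.card V + 1, 1, Nat.succ_pos _, one_pos, rfl, _,
    isPQColoring_one_of_injective G hinj⟩ ?_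
  rintro _ ⟨p, q, -, hq, rfl, c, hc⟩
  rw [le_div_iff₀ (by exact_mod_cast hq), mul_comm]
  exact_mod_cast hn p q c hc

end Fintype

/-- If `G` is a finite simple graph with `α∘(G) > 2`, then `χ_c(G) ≥ girth(G)`. -/
theorem girth_le_circChromNum {V : Type*} [Fintype V]
    (G : SimpleGraph V) (h : 2 < circAltitude G) :
    G.egirth ≤ ((⌊circChromNum G⌋₊ : ℕ) : ℕ∞) := by
  have hcycle : ∀ σ, ∃ l, IsMonotonicCycle G σ l ∧ 3 ≤ l.length := fun σ =>
    (exists_isMonotonicCycle_circAltitude_le (by omega) σ).imp fun _ hl => ⟨hl.1, by omega⟩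
  obtain ⟨l₀, hl₀, hl₀3⟩ := hcycle (Fintype.equivFin V)
  obtain ⟨g, hg⟩ := ENat.ne_top_iff_exists.mp
    (ne_top_of_le_ne_top (ENat.natCast_ne_top _) (hl₀.1.egirth_le hl₀3))
  rw [← hg, Nat.cast_le]
  refine Nat.le_floor (le_circChromNum fun p q c hc => ?_)
  obtain ⟨σ, hσ⟩ := exists_equiv_fin_monotone c
  obtain ⟨l, hl, hl3⟩ := hcycle σ
  have hgl : g ≤ l.length := by exact_mod_cast hg ▸ hl.1.egirth_le hl3
  exact (Nat.mul_le_mul_left q hgl).trans (hl.mul_length_le hc hσ)
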